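/- arXiv:2207.06743 — 5 statements merged into one kernel-verified Lean document; each statement's English description precedes it below -/
import Mathlib

section
/- If a Cayley graph Cay(G,S) on a finite abelian group G with an inverse-closed connection set S of size 5 (not containing the identity) admits a perfect code, then S contains exactly one involution. -/
/-- The Cayley graph of an additive group `G` with connection set `S`. -/
def cayley (G : Type*) [AddGroup G] (S : Set G) : SimpleGraph G where
  Adj x y := x ≠ y ∧ (y - x ∈ S ∨ x - y ∈ S)
  symm := by
    constructor
    rintro x y ⟨h1, h2⟩
    exact ⟨h1.symm, h2.symm⟩
  loopless := by
    constructor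
    rintro x ⟨h1, -⟩
    exact h1 rfl

/-- A perfect code of a graph: every vertex is at distance at most one
from exactly one vertex of `D`. -/
def IsPerfectCode {V : Type*} (Γ : SimpleGraph V) (D : Set V) : Prop :=
  ∀ v : V, ∃! c : V, c ∈ D ∧ (v = c ∨ Γ.Adj v c)

/-- The generating relation of the graph `Γ_{m,l,h}`. -/
def gammaRel (m l h : ℕ) (p q : ZMod m × ZMod l) : Prop :=
  (q.1 = p.1 + 1 ∧ q.2 = p.2) ∨
  (q.1 = p.1 ∧ p.2.val ≠ l - 1 ∧ q.2 = p.2 + 1) ∨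
  (p.2.val = l - 1 ∧ q.1 = p.1 - (h : ZMod m) ∧ q.2 = 0)

/-- The graph `Γ_{m,l,h}` of Construction 2.1. -/
def Gamma (m l h : ℕ) : SimpleGraph (ZMod m × ZMod l) where
  Adj p q := p ≠ q ∧ (gammaRel m l h p q ∨ gammaRel m l h q p)
  symm := by
    constructor
    rintro p q ⟨h1, h2⟩
    exact ⟨h1.symm, h2.symm⟩
  loopless := by
    constructor
    rintro p ⟨h1, -⟩
    exact h1 rfl

/-- `tau n m` is the minimal positive divisor `j` of `m` with `gcd (n, m/j) = 1`. -/
noncomputable def tau (n m : ℕ) : ℕ := sInf {j : ℕ | 0 < j ∧ j ∣ m ∧ Nat.gcd n (m / j) = 1}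

/-- The graph `Γ'_{m,l,h}` of Construction 2.4. -/
def Gamma' (m l h : ℕ) : SimpleGraph (ZMod m × ZMod l) where
  Adj p q := p ≠ q ∧ (gammaRel m l h p q ∨ gammaRel m l h q p ∨
    (q.1 = p.1 + ((m / 2 : ℕ) : ZMod m) ∧ q.2 = p.2) ∨
    (p.1 = q.1 + ((m / 2 : ℕ) : ZMod m) ∧ p.2 = q.2))
  symm := by
    constructor
    rintro p q ⟨h1, h2⟩
    exact ⟨h1.symm, by tauto⟩
  loopless := by
    constructor
    rintro p ⟨h1, -⟩
    exact h1 rfl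

/-- The graph `Γ''_{m,l,h}` of Construction 2.7. -/
def Gamma'' (m l h : ℕ) : SimpleGraph (ZMod m × ZMod l) where
  Adj p q := p ≠ q ∧ (gammaRel m l h p q ∨ gammaRel m l h q p ∨
    (q.1 = p.1 + (((m + h - Nat.lcm h m : ℤ) / 2 : ℤ) : ZMod m) ∧
      p.2 = q.2 + ((l / 2 : ℕ) : ZMod l)) ∨
    (p.1 = q.1 + (((m + h - Nat.lcm h m : ℤ) / 2 : ℤ) : ZMod m) ∧
      q.2 = p.2 + ((l / 2 : ℕ) : ZMod l)))
  symm := by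
    constructor
    rintro p q ⟨h1, h2⟩
    exact ⟨h1.symm, by tauto⟩
  loopless := by
    constructor
    rintro p ⟨h1, -⟩
    exact h1 rfl

/-- `sigma2 n` is the 2-adic valuation of the natural number `n`. -/
def sigma2 (n : ℕ) : ℕ := padicValNat 2 n

/-- `sigma2Z n` is the 2-adic valuation of the integer `n`. -/
def sigma2Z (n : ℤ) : ℕ := padicValInt 2 n

/-!
Write `N = S ∪ {0}`; a perfect code `D` makes `G = D ⊕ N` a tiling. Elements of `S` that are not
involutions pair off with their negatives, so `S` contains an odd number of involutions. Suppose it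
contains at least three, and let `H` be the subgroup of elements `x` with `2 • x = 0`; then more
than half of `N` lies in `H`. The number `n g` of code elements in the coset `g + H` satisfies
`|H| = ∑ s ∈ N, n (g - s)`, and the terms with `s ∈ H` all equal `n g`. Comparing this identity at
a maximum and at a minimum of `n` shows that `n` is constant, so `|N| = 6` divides `|H|`. But `H`
is a `2`-group, so `3 ∤ |H|`.
-/

open Finset

lemma even_card_filter_neg_ne {α : Type*} [InvolutiveNeg α] [DecidableEq α] (s : Finset α)
    (hs : ∀ x ∈ s, -x ∈ s) : Even #{x ∈ s | -x ≠ x} := by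
  rw [← ZMod.natCast_eq_zero_iff_even, card_eq_sum_ones, Nat.cast_sum, Nat.cast_one]
  refine sum_involution (fun x _ => -x) (fun _ _ => by decide) (fun x hx _ => (mem_filter.1 hx).2)
    (fun x hx => ?_) (fun x _ => neg_neg x)
  simp only [mem_filter] at hx ⊢
  exact ⟨hs x hx.1, by rw [neg_neg]; exact hx.2.symm⟩

lemma Finite.eq_of_forall_mul_add_sum_eq {α ι : Type*} [Finite α] (f : α → ℕ) (φ : ι → α → α)
    (R : Finset ι) {a m : ℕ} (ha : #R < a) (h : ∀ x, a * f x + ∑ i ∈ R, f (φ i x) = m)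
    (x y : α) : f x = f y := by
  have : Nonempty α := ⟨x⟩
  obtain ⟨xmax, hmax⟩ := Finite.exists_max f
  obtain ⟨xmin, hmin⟩ := Finite.exists_min f
  have hlow : a * f xmax + #R * f xmin ≤ m := by
    rw [← h xmax]
    gcongr
    simpa using card_nsmul_le_sum R (fun i => f (φ i xmax)) (f xmin) fun i _ => hmin _
  have hhigh : m ≤ a * f xmin + #R * f xmax := by
    rw [← h xmin]
    gcongr
    simpa using sum_le_card_nsmul R (fun i => f (φ i xmin)) (f xmax) fun i _ => hmax _
  have : f xmax ≤ f xmin := by nlinarith [hmin xmax]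
  exact le_antisymm ((hmax x).trans (this.trans (hmin y))) ((hmax y).trans (this.trans (hmin x)))

lemma not_dvd_card_ker_nsmul {G : Type*} [AddCommGroup G] [Finite G] {n p : ℕ} [Fact p.Prime]
    (hpn : ¬ p ∣ n) : ¬ p ∣ Nat.card (nsmulAddMonoidHom n : G →+ G).ker := by
  intro hp
  obtain ⟨x, hx⟩ := exists_prime_addOrderOf_dvd_card' p hp
  refine hpn (hx ▸ addOrderOf_dvd_of_nsmul_eq_zero ?_)
  exact Subtype.ext x.2

lemma cayley_adj_iff {G : Type*} [AddGroup G] {S : Set G} (hS : ∀ x ∈ S, -x ∈ S) (h0 : (0 : G) ∉ S)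
    {x y : G} : (cayley G S).Adj x y ↔ x - y ∈ S := by
  refine ⟨fun ⟨_, h⟩ => h.elim (fun h => neg_sub y x ▸ hS _ h) id, fun h => ⟨?_, Or.inr h⟩⟩
  rintro rfl
  exact h0 (sub_self x ▸ h)

lemma IsPerfectCode.existsUnique_sub_mem_insert_zero {G : Type*} [AddGroup G] {S D : Set G}
    (hD : IsPerfectCode (cayley G S) D) (hS : ∀ x ∈ S, -x ∈ S) (h0 : (0 : G) ∉ S) (x : G) :
    ∃! c, c ∈ D ∧ x - c ∈ insert 0 S := by
  simpa only [cayley_adj_iff hS h0, Set.mem_insert_iff, sub_eq_zero] using hD x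

lemma addOrderOf_eq_two_iff_neg_eq_self {G : Type*} [AddGroup G] {x : G} (hx : x ≠ 0) :
    addOrderOf x = 2 ↔ -x = x := by
  rw [addOrderOf_eq_prime_iff, two_nsmul, neg_eq_iff_add_eq_zero]
  exact and_iff_left hx

lemma odd_card_filter_addOrderOf_eq_two {G : Type*} [AddGroup G] [DecidableEq G] {s : Finset G}
    (hs : ∀ x ∈ s, -x ∈ s) (h0 : (0 : G) ∉ s) (hodd : Odd #s) :
    Odd #{x ∈ s | addOrderOf x = 2} := by
  have hpairs : {x ∈ s | ¬addOrderOf x = 2} = {x ∈ s | -x ≠ x} :=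
    filter_congr fun x hx => by rw [addOrderOf_eq_two_iff_neg_eq_self (ne_of_mem_of_not_mem hx h0)]
  rw [← card_filter_add_card_filter_not (addOrderOf · = 2), hpairs] at hodd
  exact (Nat.odd_add.1 hodd).2 (even_card_filter_neg_ne s hs)

section Tiling

variable {G : Type*} [AddCommGroup G] [Fintype G] {D N : Finset G} (H : AddSubgroup G)
  [DecidablePred (· ∈ H)]

lemma card_filter_sub_mem_addSubgroup (g : G) : #{x | x - g ∈ H} = Nat.card H := by
  rw [Nat.card_eq_fintype_card, ← Fintype.card_subtype]
  exact Fintype.card_congr ((Equiv.subRight g).subtypeEquiv fun x => Iff.rfl)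

lemma card_addSubgroup_eq_sum_of_tiling (hDN : ∀ x, ∃! c, c ∈ D ∧ x - c ∈ N) (g : G) :
    Nat.card H = ∑ s ∈ N, #{c ∈ D | c - (g - s) ∈ H} := by
  have hbij : #{p ∈ D ×ˢ N | p.1 + p.2 - g ∈ H} = #{x | x - g ∈ H} := by
    refine card_bij (fun p _ => p.1 + p.2) (fun p hp => ?_) (fun p hp q hq hpq => ?_) fun x hx => ?_
    · simpa using (mem_filter.1 hp).2
    · simp only [mem_filter, mem_product] at hp hq
      have hc : p.1 = q.1 := (hDN (p.1 + p.2)).unique ⟨hp.1.1, by simpa using hp.1.2⟩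
        ⟨hq.1.1, by simpa [hpq] using hq.1.2⟩
      exact Prod.ext hc (by simpa [hc] using hpq)
    · obtain ⟨c, ⟨hc, hxc⟩, -⟩ := hDN x
      exact ⟨(c, x - c), by simpa [hc, hxc] using (mem_filter.1 hx).2, by simp⟩
  rw [← card_filter_sub_mem_addSubgroup H g, ← hbij, card_filter, sum_product_right]
  refine sum_congr rfl fun s _ => ?_
  simp only [card_filter, sub_sub_eq_add_sub]

lemma card_dvd_card_addSubgroup_of_tiling (hDN : ∀ x, ∃! c, c ∈ D ∧ x - c ∈ N)
    (hH : #N < 2 * #{s ∈ N | s ∈ H}) : #N ∣ Nat.card H := by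
  set n : G → ℕ := fun g => #{c ∈ D | c - g ∈ H}
  have hshift : ∀ g, ∀ s ∈ H, n (g - s) = n g := fun g s hs => by
    simp only [n, sub_sub_eq_add_sub, add_sub_right_comm, H.add_mem_cancel_right hs]
  have hsplit : ∀ g, #{s ∈ N | s ∈ H} * n g + ∑ s ∈ N with s ∉ H, n (g - s) = Nat.card H := by
    intro g
    rw [card_addSubgroup_eq_sum_of_tiling H hDN g, ← sum_filter_add_sum_filter_not N (· ∈ H),
      sum_congr rfl fun s hs => hshift g s (mem_filter.1 hs).2, sum_const, smul_eq_mul]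
  have hcard := card_filter_add_card_filter_not (s := N) (· ∈ H)
  have hconst := Finite.eq_of_forall_mul_add_sum_eq n (fun s g => g - s) _ (by omega) hsplit
  refine ⟨n 0, ?_⟩
  rw [← hsplit 0, sum_congr rfl fun s _ => hconst _ 0, sum_const, smul_eq_mul, ← hcard]
  ring

end Tiling

theorem stmt0_general (G : Type*) [AddCommGroup G] [Fintype G] (S : Set G)
    (h0 : (0 : G) ∉ S) (hinv : ∀ x ∈ S, -x ∈ S) (h5 : S.ncard = 5)
    (D : Set G)
    (hD : IsPerfectCode (cayley G S) D) :
    ∃! t : G, t ∈ S ∧ addOrderOf t = 2 := by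
  classical
  set N : Finset G := insert 0 S.toFinset
  have hN : #N = 6 := by
    rw [card_insert_of_notMem (by simpa using h0), ← Set.ncard_eq_toFinset_card', h5]
  have htiling : ∀ x, ∃! c, c ∈ D.toFinset ∧ x - c ∈ N := by
    simpa [N] using hD.existsUnique_sub_mem_insert_zero hinv h0
  set T : Finset G := {t ∈ S.toFinset | addOrderOf t = 2}
  have hT_odd : Odd #T := odd_card_filter_addOrderOf_eq_two (by simpa using hinv) (by simpa using h0)
    (by rw [← Set.ncard_eq_toFinset_card', h5]; decide)
  have hT_lt : #T < 3 := by
    by_contra! h3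
    set H := (nsmulAddMonoidHom 2 : G →+ G).ker
    have hTH : insert 0 T ⊆ {s ∈ N | s ∈ H} := by
      refine insert_subset (by simp [N]) fun t ht => ?_
      obtain ⟨htS, ht2⟩ := mem_filter.1 ht
      simp [N, H, htS, ← ht2]
    have hmajority : #N < 2 * #{s ∈ N | s ∈ H} := by
      have := card_le_card hTH
      rw [card_insert_of_notMem (by simp [T, h0])] at this
      omega
    exact not_dvd_card_ker_nsmul (p := 3) (by norm_num)
      (dvd_trans ⟨2, rfl⟩ (hN ▸ card_dvd_card_addSubgroup_of_tiling H htiling hmajority))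
  obtain ⟨t, ht⟩ := card_eq_one.1 (by obtain ⟨k, hk⟩ := hT_odd; omega : #T = 1)
  have hmem : ∀ y, y ∈ S ∧ addOrderOf y = 2 ↔ y = t := fun y => by
    simpa [T] using Finset.ext_iff.1 ht y
  exact ⟨t, (hmem t).2 rfl, fun y hy => (hmem y).1 hy⟩

theorem stmt0 (G : Type*) [AddCommGroup G] [Fintype G] (S : Set G)
    (h0 : (0 : G) ∉ S) (hinv : ∀ x ∈ S, -x ∈ S) (h5 : S.ncard = 5)
    (hgen : AddSubgroup.closure S = ⊤) (D : Set G)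
    (hD : IsPerfectCode (cayley G S) D) :
    ∃! t : G, t ∈ S ∧ addOrderOf t = 2 :=
  stmt0_general G S h0 hinv h5 D hD
end

section
/- Let Cay(G,S) be a connected quintic Cayley graph on a finite abelian group with S = {s, -s, s', -s', s₀} where s₀ is an involution and s, s' have order greater than 2. If Cay(G,S) admits a perfect code, then the product of the orders of s and s' is even. -/
/-!
Let `H = ⟨s, s'⟩`. If `o(s) o(s')` were odd, `|H|` would be odd, so `s₀ ∉ H` and `H` has index 2.
A perfect code `D` tiles `G` by `T = {0, ±s, ±s', s₀}`: every `g` is uniquely `c + t` with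
`c ∈ D`, `t ∈ T`. Five tiles lie in `H` and one outside, so counting `H` and `G ∖ H` through the
tiling gives `|H| = 5a + b` and `|G ∖ H| = a + 5b`, with `a = |D ∩ H|`, `b = |D ∖ H|`. These agree,
hence `a = b` and `|H| = 6a` is even.
-/

open Finset

section

variable {G : Type*} [AddCommGroup G]

theorem AddSubgroup.card_sup_dvd (H K : AddSubgroup G) :
    Nat.card ↥(H ⊔ K) ∣ Nat.card H * Nat.card K := by
  let f : H × K →+ ↥(H ⊔ K) := (H.subtype.coprod K.subtype).codRestrict _
    fun p => add_mem (mem_sup_left p.1.2) (mem_sup_right p.2.2)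
  rw [← Nat.card_prod]
  refine AddSubgroup.card_dvd_of_surjective f ?_
  rintro ⟨x, hx⟩
  obtain ⟨y, hy, z, hz, rfl⟩ := AddSubgroup.mem_sup.mp hx
  exact ⟨(⟨y, hy⟩, ⟨z, hz⟩), rfl⟩

theorem AddSubgroup.index_eq_two_of_closure_eq_top {S : Set G} (hS : closure S = ⊤)
    {H : AddSubgroup G} {a : G} (ha : a ∉ H) (h2a : a + a ∈ H)
    (hSH : ∀ x ∈ S, x ∈ H ∨ x = a) : H.index = 2 := by
  refine index_eq_two_iff.mpr ⟨a, fun b => ?_⟩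
  have hb : b ∈ H ∨ b + a ∈ H := by
    induction (hS ▸ mem_top b : b ∈ closure S) using closure_induction with
    | mem x hx => exact (hSH x hx).imp_right fun h => by rwa [h]
    | zero => exact Or.inl (zero_mem H)
    | add x y _ _ hx hy =>
      rcases hx with hx | hx <;> rcases hy with hy | hy
      · exact Or.inl (add_mem hx hy)
      · exact Or.inr (by simpa [add_assoc] using add_mem hx hy)
      · exact Or.inr (by simpa [add_right_comm] using add_mem hx hy)
      · refine Or.inl ?_
        have := sub_mem (add_mem hx hy) h2a
        rwa [add_add_add_comm, add_sub_cancel_right] at this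
    | neg x _ hx =>
      rcases hx with hx | hx
      · exact Or.inl (neg_mem hx)
      · refine Or.inr ?_
        simpa [sub_eq_add_neg, add_comm, add_assoc] using sub_mem h2a hx
  rcases hb with hb | hb
  · exact Or.inr ⟨hb, fun h => ha (by simpa using sub_mem h hb)⟩
  · exact Or.inl ⟨hb, fun h => ha (by simpa using sub_mem hb h)⟩

theorem cayley_eq_or_adj_iff {S : Set G} (hS : ∀ a ∈ S, -a ∈ S) {v c : G} :
    v = c ∨ (cayley G S).Adj v c ↔ v - c ∈ insert 0 S := by
  rw [Set.mem_insert_iff, sub_eq_zero]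
  constructor
  · rintro (h | ⟨-, h | h⟩)
    · exact Or.inl h
    · exact Or.inr (by simpa using hS _ h)
    · exact Or.inr h
  · rintro (h | h)
    · exact Or.inl h
    · by_cases hvc : v = c
      · exact Or.inl hvc
      · exact Or.inr ⟨hvc, Or.inr h⟩

theorem IsPerfectCode.existsUnique_sub_mem {S : Set G} (hS : ∀ a ∈ S, -a ∈ S) {D : Set G}
    (hD : IsPerfectCode (cayley G S) D) (v : G) : ∃! c, c ∈ D ∧ v - c ∈ insert 0 S := by
  simpa only [cayley_eq_or_adj_iff hS] using hD v

section Tiling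

variable [DecidableEq G] {D T : Finset G} (hDT : ∀ v, ∃! c, c ∈ D ∧ v - c ∈ T)
include hDT

theorem card_eq_sum_card_filter_add_mem (A : Finset G) :
    #A = ∑ c ∈ D, #{t ∈ T | c + t ∈ A} := by
  have hsum : #{p ∈ D ×ˢ T | p.1 + p.2 ∈ A} = ∑ c ∈ D, #{t ∈ T | c + t ∈ A} := by
    simp only [card_filter, sum_product]
  rw [← hsum]
  symm
  refine card_nbij (fun p => p.1 + p.2) (fun p hp => (mem_filter.mp hp).2) ?_ ?_
  · rintro ⟨c, t⟩ hp ⟨c', t'⟩ hp' (h : c + t = c' + t')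
    simp only [mem_coe, mem_filter, mem_product] at hp hp'
    have hc : c = c' := (hDT (c + t)).unique ⟨hp.1.1, by simpa using hp.1.2⟩
      ⟨hp'.1.1, by simpa [h] using hp'.1.2⟩
    subst hc
    simp_all
  · intro v hv
    obtain ⟨c, ⟨hc, hvc⟩, -⟩ := hDT v
    exact ⟨(c, v - c), by simpa [hc, hvc] using hv, by simp⟩

theorem card_eq_card_mul_card_of_forall_existsUnique [Fintype G] :
    Fintype.card G = #D * #T := by
  simp only [← card_univ, card_eq_sum_card_filter_add_mem hDT univ, mem_univ, filter_true,
    sum_const, smul_eq_mul]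

/-- Writing `a`, `b` for the numbers of codewords inside and outside `H`, and `m`, `n` for those
of tiles, counting `H` through the tiling gives `|H| = a m + b n`, while `|G| = 2 |H|` gives
`(a - b)(m - n) = 0`. -/
theorem AddSubgroup.card_eq_card_mul_card_filter_mem [Fintype G] {H : AddSubgroup G}
    [DecidablePred (· ∈ H)] (hH : H.index = 2) (hT : #{t ∈ T | t ∈ H} ≠ #{t ∈ T | t ∉ H}) :
    Nat.card H = #T * #{c ∈ D | c ∈ H} := by
  set m := #{t ∈ T | t ∈ H}
  set n := #{t ∈ T | t ∉ H}
  set a := #{c ∈ D | c ∈ H}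
  set b := #{c ∈ D | c ∉ H}
  have hcoset (c : G) : #{t ∈ T | c + t ∈ (univ.filter (· ∈ H))} = if c ∈ H then m else n := by
    split_ifs with hc
    · simp only [mem_filter, mem_univ, true_and, add_mem_cancel_left hc, m]
    · simp only [mem_filter, mem_univ, true_and, add_mem_iff_of_index_two hH, hc, false_iff, n]
  have hHcard : Nat.card H = a * m + b * n := by
    rw [Nat.card_eq_fintype_card, Fintype.card_subtype, card_eq_sum_card_filter_add_mem hDT,
      sum_congr rfl fun c _ => hcoset c, sum_ite, sum_const, sum_const, smul_eq_mul, smul_eq_mul]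
  have hGcard : 2 * Nat.card H = #D * #T := by
    rw [← card_eq_card_mul_card_of_forall_existsUnique hDT, ← Nat.card_eq_fintype_card,
      ← H.card_mul_index, hH, mul_comm]
  have hD : #D = a + b := (card_filter_add_card_filter_not _).symm
  have hT' : #T = m + n := (card_filter_add_card_filter_not _).symm
  have hab : a = b := by
    rw [hHcard, hD, hT'] at hGcard
    have hGcard' : (2 : ℤ) * (a * m + b * n) = (a + b) * (m + n) := by exact_mod_cast hGcard
    have hprod : ((a : ℤ) - b) * (m - n) = 0 := by linear_combination hGcard'
    have hmn : (m : ℤ) - n ≠ 0 := sub_ne_zero.mpr (by exact_mod_cast hT)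
    exact_mod_cast sub_eq_zero.mp ((mul_eq_zero.mp hprod).resolve_right hmn)
  rw [hHcard, hT', ← hab]
  ring

end Tiling

end

theorem stmt1 (G : Type*) [AddCommGroup G] [Fintype G] (s s' s₀ : G)
    (h5 : ({s, -s, s', -s', s₀} : Set G).ncard = 5)
    (h0 : addOrderOf s₀ = 2) (hs : 2 < addOrderOf s) (hs' : 2 < addOrderOf s')
    (hgen : AddSubgroup.closure ({s, -s, s', -s', s₀} : Set G) = ⊤)
    (D : Set G)
    (hD : IsPerfectCode (cayley G ({s, -s, s', -s', s₀} : Set G)) D) :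
    2 ∣ addOrderOf s * addOrderOf s' := by
  classical
  by_contra hodd
  set H := AddSubgroup.zmultiples s ⊔ AddSubgroup.zmultiples s'
  have hsH : s ∈ H := AddSubgroup.mem_sup_left (AddSubgroup.mem_zmultiples s)
  have hs'H : s' ∈ H := AddSubgroup.mem_sup_right (AddSubgroup.mem_zmultiples s')
  have hHodd : ¬ 2 ∣ Nat.card H := fun h2 => hodd <| h2.trans <| by
    simpa only [Nat.card_zmultiples] using
      AddSubgroup.card_sup_dvd (AddSubgroup.zmultiples s) (AddSubgroup.zmultiples s')
  have hs₀H : s₀ ∉ H := fun h => hHodd (h0 ▸ H.addOrderOf_dvd_natCard h)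
  have h2s₀ : s₀ + s₀ = 0 := by rw [← two_nsmul, ← h0, addOrderOf_nsmul_eq_zero]
  have hindex : H.index = 2 :=
    AddSubgroup.index_eq_two_of_closure_eq_top hgen hs₀H (h2s₀ ▸ zero_mem H) <| by
      rintro x (rfl | rfl | rfl | rfl | rfl) <;> simp [hsH, hs'H]
  have hsymm : ∀ a ∈ ({s, -s, s', -s', s₀} : Set G), -a ∈ ({s, -s, s', -s', s₀} : Set G) := by
    rintro a (rfl | rfl | rfl | rfl | rfl) <;> simp [neg_eq_of_add_eq_zero_left h2s₀]
  set T : Finset G := {0, s, -s, s', -s', s₀}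
  have hDT : ∀ v, ∃! c, c ∈ D.toFinset ∧ v - c ∈ T := by
    simpa [T] using hD.existsUnique_sub_mem hsymm
  have hT : #T = 6 := by
    have hs0 : s ≠ 0 := by rintro rfl; simp at hs
    have hs'0 : s' ≠ 0 := by rintro rfl; simp at hs'
    have hs₀0 : s₀ ≠ 0 := by rintro rfl; simp at h0
    rw [card_insert_of_notMem (by simp [eq_comm, hs0, hs'0, hs₀0]), ← Set.ncard_coe_finset]
    simpa using h5
  have hTout : #{t ∈ T | t ∉ H} = 1 := by
    simp [T, filter_insert, filter_singleton, hsH, hs'H, hs₀H]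
  have hTin : #{t ∈ T | t ∈ H} = 5 := by
    have := card_filter_add_card_filter_not (s := T) (· ∈ H)
    omega
  apply hHodd
  rw [AddSubgroup.card_eq_card_mul_card_filter_mem hDT hindex (by omega), hT]
  exact dvd_mul_of_dvd_left (by norm_num) _
end

section
/- Let Cay(G,S) be a connected quintic Cayley graph on a finite abelian group with S = {s, -s, s', -s', s₀}, s₀ an involution, and o(s), o(s') > 2. If D is a perfect code containing the identity 0, then for every integer l, either l·s + l·s' + l·s₀ ∈ D or -l·s + l·s' + l·s₀ ∈ D. -/
theorem List.nodup_of_ncard_eq_length {α : Type*} {l : List α}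
    (h : {x | x ∈ l}.ncard = l.length) : l.Nodup := by
  classical
  rw [show {x | x ∈ l} = ↑l.toFinset by ext; simp, Set.ncard_coe_finset] at h
  exact Multiset.toFinset_card_eq_card_iff_nodup.mp h

section Line

variable {G : Type*} [AddCommGroup G] {D : Set G} {u : G}

theorem nsmul_mem_of_add_mem (h0 : 0 ∈ D) (hu : u ∈ D)
    (hadd : ∀ c, c - u ∈ D → c ∈ D → c + u ∈ D) (n : ℕ) : n • u ∈ D := by
  suffices n • u ∈ D ∧ (n + 1) • u ∈ D from this.1
  induction n with
  | zero => simpa using ⟨h0, hu⟩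
  | succ n ih =>
    refine ⟨ih.2, ?_⟩
    rw [succ_nsmul]
    exact hadd _ (by rw [succ_nsmul, add_sub_cancel_right]; exact ih.1) ih.2

theorem zsmul_mem_of_add_mem (h0 : 0 ∈ D) (hu : u ∈ D)
    (hadd : ∀ c, c - u ∈ D → c ∈ D → c + u ∈ D) (hsub : ∀ c, c + u ∈ D → c ∈ D → c - u ∈ D)
    (n : ℤ) : n • u ∈ D := by
  obtain ⟨n, rfl | rfl⟩ := n.eq_nat_or_neg
  · simpa using nsmul_mem_of_add_mem h0 hu hadd n
  · have hu' : -u ∈ D := by simpa using hsub 0 (by simpa) h0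
    simpa using nsmul_mem_of_add_mem h0 hu'
      (fun c hc hc' => by simpa [← sub_eq_add_neg] using hsub c (by simpa using hc) hc') n

end Line

theorem cayley_eq_or_adj_of_sub_mem {G : Type*} [AddGroup G] {S : Set G} {x y : G}
    (h : y - x ∈ insert 0 S) : x = y ∨ (cayley G S).Adj x y := by
  rcases eq_or_ne x y with hxy | hxy
  · exact .inl hxy
  · exact .inr ⟨hxy, .inl ((Set.mem_insert_iff.mp h).resolve_left (sub_ne_zero.mpr hxy.symm))⟩

namespace IsPerfectCode

variable {G : Type*} [AddCommGroup G] {S D : Set G}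

theorem exists_add_mem_of_cayley (hD : IsPerfectCode (cayley G S) D)
    (hS : ∀ t ∈ S, -t ∈ S) (x : G) : ∃ t ∈ insert 0 S, x + t ∈ D := by
  obtain ⟨c, ⟨hc, hxc⟩, -⟩ := hD x
  refine ⟨c - x, ?_, by rwa [add_sub_cancel]⟩
  rcases hxc with rfl | ⟨-, hcx | hxc⟩
  · simp
  · exact .inr hcx
  · exact .inr (by simpa using hS _ hxc)

theorem add_eq_zero_of_cayley (hD : IsPerfectCode (cayley G S) D) {c d t₁ t₂ : G}
    (hc : c ∈ D) (hd : d ∈ D) (h₁ : t₁ ∈ insert 0 S) (h₂ : t₂ ∈ insert 0 S)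
    (e : d = c + t₁ + t₂) : t₁ + t₂ = 0 := by
  have hcd : c = d := (hD (c + t₁)).unique
    ⟨hc, (cayley_eq_or_adj_of_sub_mem (by simpa using h₁)).imp Eq.symm SimpleGraph.Adj.symm⟩
    ⟨hd, cayley_eq_or_adj_of_sub_mem (by rwa [e, add_sub_cancel_left])⟩
  rwa [← hcd, add_assoc, left_eq_add] at e

end IsPerfectCode

/-- Equivalently: `s₀` has order two and `{s, -s, s', -s', s₀}` has five elements. -/
structure IsQuinticPerfectCode {G : Type*} [AddCommGroup G] (s s' s₀ : G) (D : Set G) :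
    Prop where
  isPerfectCode : IsPerfectCode (cayley G {s, -s, s', -s', s₀}) D
  s₀_add_s₀ : s₀ + s₀ = 0
  s₀_ne_zero : s₀ ≠ 0
  s_add_s_ne_zero : s + s ≠ 0
  s'_add_s'_ne_zero : s' + s' ≠ 0
  s_add_s'_ne_zero : s + s' ≠ 0
  s_sub_s'_ne_zero : s - s' ≠ 0

namespace IsQuinticPerfectCode

variable {G : Type*} [AddCommGroup G] {s s' s₀ c d t t₁ t₂ : G} {D : Set G}

theorem of_ncard_eq_five (hD : IsPerfectCode (cayley G {s, -s, s', -s', s₀}) D)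
    (h5 : ({s, -s, s', -s', s₀} : Set G).ncard = 5) (h0 : addOrderOf s₀ = 2) :
    IsQuinticPerfectCode s s' s₀ D := by
  have hnodup : [s, -s, s', -s', s₀].Nodup := by
    apply List.nodup_of_ncard_eq_length
    rwa [show {x | x ∈ [s, -s, s', -s', s₀]} = ({s, -s, s', -s', s₀} : Set G) by ext; simp]
  simp only [List.nodup_cons, List.mem_cons, List.not_mem_nil, or_false, not_or] at hnodup
  obtain ⟨⟨hs, hss', hss'', -⟩, -, ⟨hs', -⟩, -⟩ := hnodup
  refine ⟨hD, by rw [← two_nsmul, ← h0, addOrderOf_nsmul_eq_zero], fun h => by simp [h] at h0,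
    ?_, ?_, ?_, sub_ne_zero.mpr hss'⟩ <;> rwa [Ne, add_eq_zero_iff_eq_neg]

theorem swap (h : IsQuinticPerfectCode s s' s₀ D) : IsQuinticPerfectCode s' s s₀ D where
  isPerfectCode := by
    convert h.isPerfectCode using 2
    ext
    simp only [Set.mem_insert_iff, Set.mem_singleton_iff]
    tauto
  s₀_add_s₀ := h.s₀_add_s₀
  s₀_ne_zero := h.s₀_ne_zero
  s_add_s_ne_zero := h.s'_add_s'_ne_zero
  s'_add_s'_ne_zero := h.s_add_s_ne_zero
  s_add_s'_ne_zero := by rw [add_comm]; exact h.s_add_s'_ne_zero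
  s_sub_s'_ne_zero := by rw [← neg_sub, neg_ne_zero]; exact h.s_sub_s'_ne_zero

theorem neg_left (h : IsQuinticPerfectCode s s' s₀ D) : IsQuinticPerfectCode (-s) s' s₀ D where
  isPerfectCode := by rw [neg_neg, Set.insert_comm]; exact h.isPerfectCode
  s₀_add_s₀ := h.s₀_add_s₀
  s₀_ne_zero := h.s₀_ne_zero
  s_add_s_ne_zero := by rw [← neg_add, neg_ne_zero]; exact h.s_add_s_ne_zero
  s'_add_s'_ne_zero := h.s'_add_s'_ne_zero
  s_add_s'_ne_zero := by rw [neg_add_eq_sub, ← neg_sub, neg_ne_zero]; exact h.s_sub_s'_ne_zero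
  s_sub_s'_ne_zero := by rw [← neg_add', neg_ne_zero]; exact h.s_add_s'_ne_zero

theorem neg (h : IsQuinticPerfectCode s s' s₀ D) : IsQuinticPerfectCode (-s) (-s') s₀ D :=
  h.neg_left.swap.neg_left.swap

theorem s_ne_zero (h : IsQuinticPerfectCode s s' s₀ D) : s ≠ 0 :=
  fun hs => h.s_add_s_ne_zero (by rw [hs, add_zero])

theorem s_add_s₀_ne_zero (h : IsQuinticPerfectCode s s' s₀ D) : s + s₀ ≠ 0 := by
  intro hs
  apply h.s_add_s_ne_zero
  rw [eq_neg_of_add_eq_zero_left hs, ← neg_add, h.s₀_add_s₀, neg_zero]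

theorem mem_or (h : IsQuinticPerfectCode s s' s₀ D) (x : G) :
    x ∈ D ∨ x + s ∈ D ∨ x + -s ∈ D ∨ x + s' ∈ D ∨ x + -s' ∈ D ∨ x + s₀ ∈ D := by
  have hS : ∀ t ∈ ({s, -s, s', -s', s₀} : Set G), -t ∈ ({s, -s, s', -s', s₀} : Set G) := by
    simp only [Set.mem_insert_iff, Set.mem_singleton_iff]
    rintro t (rfl | rfl | rfl | rfl | rfl) <;> simp [neg_eq_of_add_eq_zero_left h.s₀_add_s₀]
  obtain ⟨t, ht, hx⟩ := h.isPerfectCode.exists_add_mem_of_cayley hS x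
  simp only [Set.mem_insert_iff, Set.mem_singleton_iff] at ht
  rcases ht with rfl | rfl | rfl | rfl | rfl | rfl <;> simp_all

theorem ne_add_add (h : IsQuinticPerfectCode s s' s₀ D) (hc : c ∈ D) (hd : d ∈ D)
    (h₁ : t₁ ∈ ({0, s, -s, s', -s', s₀} : Set G)) (h₂ : t₂ ∈ ({0, s, -s, s', -s', s₀} : Set G))
    (hne : t₁ + t₂ ≠ 0) : d ≠ c + t₁ + t₂ :=
  fun e => hne (h.isPerfectCode.add_eq_zero_of_cayley hc hd h₁ h₂ e)

theorem ne_add (h : IsQuinticPerfectCode s s' s₀ D) (hc : c ∈ D) (hd : d ∈ D)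
    (ht : t ∈ ({s, -s, s', -s', s₀} : Set G)) : d ≠ c + t := by
  have hne : t + 0 ≠ 0 := by
    simp only [Set.mem_insert_iff, Set.mem_singleton_iff] at ht
    rcases ht with rfl | rfl | rfl | rfl | rfl
    · simpa using h.s_ne_zero
    · simpa using h.s_ne_zero
    · simpa using h.swap.s_ne_zero
    · simpa using h.swap.s_ne_zero
    · simpa using h.s₀_ne_zero
  simpa using h.ne_add_add hc hd (.inr ht) (.inl rfl) hne
theorem add_mem_or (h : IsQuinticPerfectCode s s' s₀ D) (hc : c ∈ D) :
    c + (s + s' + s₀) ∈ D ∨ c + (s + s + s' + s₀) ∈ D ∨ c + (s + s' + s' + s₀) ∈ D := by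
  have hs₀ := h.s₀_add_s₀
  rcases h.mem_or (c + (s + s' + s₀)) with hd | hd | hd | hd | hd | hd
  · exact .inl hd
  · exact .inr (.inl (by convert hd using 1; abel))
  · exact (h.ne_add_add hc hd (by simp) (by simp) h.swap.s_add_s₀_ne_zero (by abel)).elim
  · exact .inr (.inr (by convert hd using 1; abel))
  · exact (h.ne_add_add hc hd (by simp) (by simp) h.s_add_s₀_ne_zero (by abel)).elim
  · exact (h.ne_add_add hc hd (by simp) (by simp) h.s_add_s'_ne_zero (by grind)).elim

theorem add_sub_add_mem (h : IsQuinticPerfectCode s s' s₀ D) (hc : c ∈ D)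
    (ha : c + (s + s + s' + s₀) ∈ D) : c + (s - s' + s₀) ∈ D := by
  have hs₀ := h.s₀_add_s₀
  rcases h.mem_or (c + (s + s₀)) with hd | hd | hd | hd | hd | hd
  · exact (h.ne_add_add hc hd (by simp) (by simp) h.s_add_s₀_ne_zero (by abel)).elim
  · exact (h.ne_add ha hd (t := -s') (by simp) (by abel)).elim
  · exact (h.ne_add hc hd (t := s₀) (by simp) (by abel)).elim
  · exact (h.ne_add ha hd (t := -s) (by simp) (by abel)).elim
  · convert hd using 1; abel
  · exact (h.ne_add hc hd (t := s) (by simp) (by grind)).elim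

theorem add_add_add_mem (h : IsQuinticPerfectCode s s' s₀ D) (hc : c ∈ D)
    (ha : c + (s + s + s' + s₀) ∈ D) : c + (s + s' + s') ∈ D := by
  have hs₀ := h.s₀_add_s₀
  rcases h.mem_or (c + (s + s')) with hd | hd | hd | hd | hd | hd
  · exact (h.ne_add_add hc hd (by simp) (by simp) h.s_add_s'_ne_zero (by abel)).elim
  · exact (h.ne_add ha hd (t := s₀) (by simp) (by grind)).elim
  · exact (h.ne_add hc hd (t := s') (by simp) (by abel)).elim
  · convert hd using 1; abel
  · exact (h.ne_add hc hd (t := s) (by simp) (by abel)).elim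
  · exact (h.ne_add ha hd (t := -s) (by simp) (by abel)).elim

theorem neg_add_add_mem (h : IsQuinticPerfectCode s s' s₀ D) (hc : c ∈ D)
    (ha : c + (s + s + s' + s₀) ∈ D) : c + (-s + s' + s₀) ∈ D := by
  have hs₀ := h.s₀_add_s₀
  have hb := h.add_add_add_mem hc ha
  rcases h.mem_or (c + (s' + s₀)) with hd | hd | hd | hd | hd | hd
  · exact (h.ne_add_add hc hd (by simp) (by simp) h.swap.s_add_s₀_ne_zero (by abel)).elim
  · exact (h.ne_add ha hd (t := -s) (by simp) (by abel)).elim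
  · convert hd using 1; abel
  · exact (h.ne_add_add hb hd (by simp) (by simp) h.neg_left.s_add_s₀_ne_zero (by abel)).elim
  · exact (h.ne_add hc hd (t := s₀) (by simp) (by abel)).elim
  · exact (h.ne_add hc hd (t := s') (by simp) (by grind)).elim

theorem mem_of_add_not_mem (h : IsQuinticPerfectCode s s' s₀ D) (hc : c ∈ D)
    (hu : c + (s + s' + s₀) ∉ D) : c + (s - s' + s₀) ∈ D ∧ c + (-s + s' + s₀) ∈ D := by
  rcases (h.add_mem_or hc).resolve_left hu with ha | ha
  · exact ⟨h.add_sub_add_mem hc ha, h.neg_add_add_mem hc ha⟩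
  · have ha' : c + (s' + s' + s + s₀) ∈ D := by convert ha using 1; abel
    constructor
    · convert h.swap.neg_add_add_mem hc ha' using 1; abel
    · convert h.swap.add_sub_add_mem hc ha' using 1; abel

theorem add_mem_of_sub_mem (h : IsQuinticPerfectCode s s' s₀ D)
    (hc' : c - (s + s' + s₀) ∈ D) (hc : c ∈ D) : c + (s + s' + s₀) ∈ D := by
  by_contra hu
  have hs₀ := h.s₀_add_s₀
  exact h.ne_add_add hc' (h.mem_of_add_not_mem hc hu).1 (by simp) (by simp)
    h.s_add_s_ne_zero (by grind)

theorem sub_mem_of_add_mem (h : IsQuinticPerfectCode s s' s₀ D)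
    (hc' : c + (s + s' + s₀) ∈ D) (hc : c ∈ D) : c - (s + s' + s₀) ∈ D := by
  have hs₀ := h.s₀_add_s₀
  convert h.neg.add_mem_of_sub_mem (by convert hc' using 1; grind) hc using 1
  grind

theorem zsmul_mem (h : IsQuinticPerfectCode s s' s₀ D) (h0 : 0 ∈ D) (hu : s + s' + s₀ ∈ D)
    (n : ℤ) : n • (s + s' + s₀) ∈ D :=
  zsmul_mem_of_add_mem h0 hu (fun _ => h.add_mem_of_sub_mem) (fun _ => h.sub_mem_of_add_mem) n

theorem zsmul_mem_or (h : IsQuinticPerfectCode s s' s₀ D) (h0 : 0 ∈ D) :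
    (∀ n : ℤ, n • (s + s' + s₀) ∈ D) ∨ ∀ n : ℤ, n • (-s + s' + s₀) ∈ D := by
  by_cases hu : s + s' + s₀ ∈ D
  · exact .inl (h.zsmul_mem h0 hu)
  · have hv := (h.mem_of_add_not_mem h0 (by rwa [zero_add])).2
    exact .inr (h.neg_left.zsmul_mem h0 (by rwa [zero_add] at hv))

end IsQuinticPerfectCode

theorem stmt2_general (G : Type*) [AddCommGroup G] (s s' s₀ : G)
    (h5 : ({s, -s, s', -s', s₀} : Set G).ncard = 5)
    (h0 : addOrderOf s₀ = 2)
    (D : Set G)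
    (hD : IsPerfectCode (cayley G ({s, -s, s', -s', s₀} : Set G)) D)
    (hD0 : (0 : G) ∈ D) :
    ∀ l : ℤ, (l • s + l • s' + l • s₀ ∈ D) ∨ (-(l • s) + l • s' + l • s₀ ∈ D) := by
  intro l
  rcases (IsQuinticPerfectCode.of_ncard_eq_five hD h5 h0).zsmul_mem_or hD0 with hu | hv
  · exact .inl (by simpa [smul_add] using hu l)
  · exact .inr (by simpa [smul_add] using hv l)

theorem stmt2 (G : Type*) [AddCommGroup G] [Fintype G] (s s' s₀ : G)
    (h5 : ({s, -s, s', -s', s₀} : Set G).ncard = 5)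
    (h0 : addOrderOf s₀ = 2) (hs : 2 < addOrderOf s) (hs' : 2 < addOrderOf s')
    (hgen : AddSubgroup.closure ({s, -s, s', -s', s₀} : Set G) = ⊤)
    (D : Set G)
    (hD : IsPerfectCode (cayley G ({s, -s, s', -s', s₀} : Set G)) D)
    (hD0 : (0 : G) ∈ D) :
    ∀ l : ℤ, (l • s + l • s' + l • s₀ ∈ D) ∨ (-(l • s) + l • s' + l • s₀ ∈ D) :=
  stmt2_general G s s' s₀ h5 h0 D hD hD0
end

section
/- Let Cay(G,S) be a connected quintic Cayley graph on a finite abelian group with S = {s, -s, s', -s', s₀}, s₀ an involution, o(s), o(s') > 2. Suppose D is a perfect code such that g + a·s + s' + s₀ ∈ D for all g ∈ D, where a ∈ {-1, 1}. If h·s + l·s' = 0 for integers h, l with 0 ≤ h ≤ o(s) and 0 ≤ l ≤ o(s'), then 3 divides l - a·h. -/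
/-!
Write `t = s + s' + s₀`; replacing `s` by `-s` reduces to `a = 1`, where `D + t = D` by finiteness.
Every `v` lies at offset `v - c ∈ {0, ±s, ±s', s₀}` from a unique codeword `c`; colour `v` by the
weight of this offset under `s ↦ -1`, `s' ↦ 1`, `s₀ ↦ 0` in `ZMod 3`. Comparing the codewords of
`v` and `v + s'` (they differ by `0` or `±t`, or uniqueness rules the configuration out) shows that
the colour increases by `1` along `s'`. Exchanging `s` and `s'` negates the weight, so the colour
decreases by `1` along `s`, and walking along `h • s + l • s' = 0` back to the start gives
`l - h ≡ 0 [ZMOD 3]`.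
-/

section CayleyGraph

variable {G : Type*} [AddGroup G]

theorem eq_or_cayley_adj_iff {S : Set G} (hS : ∀ x ∈ S, -x ∈ S) {x y : G} :
    x = y ∨ (cayley G S).Adj x y ↔ x - y ∈ insert 0 S := by
  rw [Set.mem_insert_iff, sub_eq_zero]
  by_cases hxy : x = y
  · simp [hxy]
  · have : y - x ∈ S ↔ x - y ∈ S :=
      ⟨fun h ↦ by simpa using hS _ h, fun h ↦ by simpa using hS _ h⟩
    simp [cayley, hxy, this]

theorem isPerfectCode_cayley_iff {S : Set G} (hS : ∀ x ∈ S, -x ∈ S) {D : Set G} :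
    IsPerfectCode (cayley G S) D ↔ ∀ v, ∃! c, c ∈ D ∧ v - c ∈ insert 0 S := by
  simp only [IsPerfectCode, eq_or_cayley_adj_iff hS]

end CayleyGraph

theorem add_mem_iff_of_forall_add_mem {G : Type*} [AddGroup G] {D : Set G} (hD : D.Finite)
    {t : G} (h : ∀ c ∈ D, c + t ∈ D) (c : G) : c + t ∈ D ↔ c ∈ D := by
  refine ⟨fun hc ↦ ?_, h c⟩
  have hbij := (hD.injOn_iff_bijOn_of_mapsTo h).mp (add_left_injective t).injOn
  obtain ⟨d, hd, hdc⟩ := hbij.surjOn hc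
  rwa [← add_right_cancel hdc]

theorem map_add_zsmul_of_map_add {G M : Type*} [AddGroup G] [AddCommGroup M] {f : G → M}
    {g : G} {d : M} (hf : ∀ v, f (v + g) = f v + d) (n : ℤ) (v : G) :
    f (v + n • g) = f v + n • d := by
  induction n using Int.induction_on with
  | zero => simp
  | succ k ih => rw [add_zsmul, one_zsmul, ← add_assoc, hf, ih, add_zsmul, one_zsmul, add_assoc]
  | pred k ih =>
    have := hf (v + (-k : ℤ) • g + -g)
    rw [neg_add_cancel_right, ih] at this
    rw [sub_zsmul, sub_zsmul, one_zsmul, one_zsmul, ← add_assoc, ← add_assoc, this,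
      add_neg_cancel_right]

theorem zsmul_add_zsmul_eq_zero_of_map_add {G M : Type*} [AddGroup G] [AddCommGroup M]
    {f : G → M} {g g' : G} {d d' : M} (hf : ∀ v, f (v + g) = f v + d)
    (hf' : ∀ v, f (v + g') = f v + d') {h l : ℤ} (hrel : h • g + l • g' = 0) :
    h • d + l • d' = 0 := by
  have := map_add_zsmul_of_map_add hf' l (h • g)
  rwa [hrel, ← zero_add (h • g), map_add_zsmul_of_map_add hf, add_assoc, eq_comm,
    add_eq_left] at this

section Quintic

variable {G : Type*} [AddCommGroup G]

def quinticBall (s s' s₀ : G) : Set G := {0, s, -s, s', -s', s₀}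

theorem quinticBall_comm (s s' s₀ : G) : quinticBall s' s s₀ = quinticBall s s' s₀ := by
  ext; simp only [quinticBall, Set.mem_insert_iff, Set.mem_singleton_iff]; tauto

theorem quinticBall_neg_left (s s' s₀ : G) : quinticBall (-s) s' s₀ = quinticBall s s' s₀ := by
  ext; simp only [quinticBall, neg_neg, Set.mem_insert_iff, Set.mem_singleton_iff]; tauto

theorem nodup_of_ncard_quinticBall {s s' s₀ : G} (h : (quinticBall s s' s₀).ncard = 6) :
    [0, s, -s, s', -s', s₀].Nodup := by
  classical
  have : quinticBall s s' s₀ = ↑[0, s, -s, s', -s', s₀].toFinset := by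
    ext; simp [quinticBall]
  rw [this, Set.ncard_coe_finset] at h
  exact Multiset.toFinset_card_eq_card_iff_nodup.mp h

open Classical in
noncomputable def weight (s s' x : G) : ZMod 3 :=
  (if x = -s ∨ x = s' then 1 else 0) - (if x = s ∨ x = -s' then 1 else 0)

theorem weight_swap (s s' x : G) : weight s' s x = -weight s s' x := by
  unfold weight
  split_ifs <;> grind

theorem weight_values {s s' s₀ : G} (h : [0, s, -s, s', -s', s₀].Nodup) :
    weight s s' 0 = 0 ∧ weight s s' s = -1 ∧ weight s s' (-s) = 1 ∧ weight s s' s' = 1 ∧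
      weight s s' (-s') = -1 ∧ weight s s' s₀ = 0 := by
  simp only [List.nodup_cons, List.mem_cons, List.not_mem_nil, List.nodup_nil] at h
  refine ⟨?_, ?_, ?_, ?_, ?_, ?_⟩ <;> unfold weight <;> split_ifs <;> grind

-- The closed ball having six elements says that `0, ±s, ±s', s₀` are pairwise distinct.
structure IsInvariantQuinticCode (s s' s₀ : G) (D : Set G) : Prop where
  existsUnique_sub_mem : ∀ v, ∃! c, c ∈ D ∧ v - c ∈ quinticBall s s' s₀
  neg_s₀_eq : -s₀ = s₀
  add_mem_iff : ∀ c, c + (s + s' + s₀) ∈ D ↔ c ∈ D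
  ncard_quinticBall : (quinticBall s s' s₀).ncard = 6

namespace IsInvariantQuinticCode

variable {s s' s₀ : G} {D : Set G}

theorem swap (hD : IsInvariantQuinticCode s s' s₀ D) : IsInvariantQuinticCode s' s s₀ D where
  existsUnique_sub_mem := by simpa only [quinticBall_comm] using hD.existsUnique_sub_mem
  neg_s₀_eq := hD.neg_s₀_eq
  add_mem_iff := by simpa only [add_comm s' s] using hD.add_mem_iff
  ncard_quinticBall := by rw [quinticBall_comm]; exact hD.ncard_quinticBall

theorem sub_eq_of_sub_eq (hD : IsInvariantQuinticCode s s' s₀ D) {u c₁ c₂ z : G} (h₁ : c₁ ∈ D)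
    (h₂ : c₂ ∈ D) (hu₁ : u - c₁ ∈ quinticBall s s' s₀) (hu₂ : u - c₂ = z)
    (hz : z ∈ quinticBall s s' s₀) : u - c₁ = z := by
  rw [(hD.existsUnique_sub_mem u).unique ⟨h₁, hu₁⟩ ⟨h₂, hu₂ ▸ hz⟩, hu₂]

theorem sub_mem_of_mem (hD : IsInvariantQuinticCode s s' s₀ D) {c : G} (hc : c ∈ D) :
    c - (s + s' + s₀) ∈ D :=
  (hD.add_mem_iff _).1 (by rwa [sub_add_cancel])

-- Any other offset of `v + s'` from `c'` would make `c'` or `c' - t` a codeword of `v` at an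
-- offset outside `{-s, s'}`.
theorem add_right_sub_eq_or (hD : IsInvariantQuinticCode s s' s₀ D) {v c c' : G} (hc : c ∈ D)
    (hv : v - c ∈ quinticBall s s' s₀) (hc' : c' ∈ D) (hv' : v + s' - c' ∈ quinticBall s s' s₀)
    (hx : v - c = -s ∨ v - c = s') : v + s' - c' = s ∨ v + s' - c' = -s' := by
  have hne := nodup_of_ncard_quinticBall hD.ncard_quinticBall
  simp only [List.nodup_cons, List.mem_cons, List.not_mem_nil, List.nodup_nil] at hne
  have hs₀ := hD.neg_s₀_eq
  simp only [quinticBall, Set.mem_insert_iff, Set.mem_singleton_iff] at hv'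
  rcases hv' with hy | hy | hy | hy | hy | hy
  · have := hD.sub_eq_of_sub_eq hc hc' hv (z := -s')
      (by linear_combination (norm := module) hy) (by simp [quinticBall])
    grind
  · exact Or.inl hy
  · have := hD.sub_eq_of_sub_eq hc (hD.sub_mem_of_mem hc') hv (z := s₀)
      (by linear_combination (norm := module) hy) (by simp [quinticBall])
    grind
  · have := hD.sub_eq_of_sub_eq hc hc' hv (z := 0)
      (by linear_combination (norm := module) hy) (by simp [quinticBall])
    grind
  · exact Or.inr hy
  · have := hD.sub_eq_of_sub_eq hc (hD.sub_mem_of_mem hc') hv (z := s)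
      (by linear_combination (norm := module) hy - hs₀) (by simp [quinticBall])
    grind

theorem weight_add_right (hD : IsInvariantQuinticCode s s' s₀ D) {v c c' : G} (hc : c ∈ D)
    (hv : v - c ∈ quinticBall s s' s₀) (hc' : c' ∈ D) (hv' : v + s' - c' ∈ quinticBall s s' s₀) :
    weight s s' (v + s' - c') = weight s s' (v - c) + 1 := by
  obtain ⟨w0, ws, wns, ws', wns', ws₀⟩ :=
    weight_values (nodup_of_ncard_quinticBall hD.ncard_quinticBall)
  have hs₀ := hD.neg_s₀_eq
  have hct : c + (s + s' + s₀) ∈ D := (hD.add_mem_iff c).2 hc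
  have hx := hv
  simp only [quinticBall, Set.mem_insert_iff, Set.mem_singleton_iff] at hx
  rcases hx with hx | hx | hx | hx | hx | hx
  · rw [hD.sub_eq_of_sub_eq hc' hc hv' (z := s') (by linear_combination (norm := module) hx)
      (by simp [quinticBall]), hx, ws', w0, zero_add]
  · rw [hD.sub_eq_of_sub_eq hc' hct hv' (z := s₀) (by linear_combination (norm := module) hx + hs₀)
      (by simp [quinticBall]), hx, ws₀, ws, neg_add_cancel]
  · rcases hD.add_right_sub_eq_or hc hv hc' hv' (Or.inl hx) with hy | hy <;>
      rw [hy, hx] <;> simp only [ws, wns, wns'] <;> decide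
  · rcases hD.add_right_sub_eq_or hc hv hc' hv' (Or.inr hx) with hy | hy <;>
      rw [hy, hx] <;> simp only [ws, ws', wns'] <;> decide
  · rw [hD.sub_eq_of_sub_eq hc' hc hv' (z := 0) (by linear_combination (norm := module) hx)
      (by simp [quinticBall]), hx, w0, wns', neg_add_cancel]
  · rw [hD.sub_eq_of_sub_eq hc' hct hv' (z := -s) (by linear_combination (norm := module) hx)
      (by simp [quinticBall]), hx, wns, ws₀, zero_add]

theorem three_dvd_sub (hD : IsInvariantQuinticCode s s' s₀ D) {h l : ℤ}
    (hrel : h • s + l • s' = 0) : (3 : ℤ) ∣ l - h := by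
  choose E hE using fun v ↦ (hD.existsUnique_sub_mem v).exists
  have hf' : ∀ v, weight s s' (v + s' - E (v + s')) = weight s s' (v - E v) + 1 := fun v ↦
    hD.weight_add_right (hE v).1 (hE v).2 (hE _).1 (hE _).2
  have hf : ∀ v, weight s s' (v + s - E (v + s)) = weight s s' (v - E v) + -1 := fun v ↦ by
    have := hD.swap.weight_add_right (hE v).1 (quinticBall_comm s s' s₀ ▸ (hE v).2) (hE _).1
      (quinticBall_comm s s' s₀ ▸ (hE _).2)
    rw [weight_swap s s', weight_swap s s'] at this
    linear_combination -this
  have := zsmul_add_zsmul_eq_zero_of_map_add (f := fun v ↦ weight s s' (v - E v)) hf hf' hrel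
  refine (ZMod.intCast_zmod_eq_zero_iff_dvd (l - h) 3).mp ?_
  simp only [zsmul_eq_mul, mul_neg, mul_one] at this
  push_cast
  linear_combination this

end IsInvariantQuinticCode

end Quintic

theorem stmt5_general (G : Type*) [AddCommGroup G] [Fintype G] (s s' s₀ : G)
    (h5 : ({s, -s, s', -s', s₀} : Set G).ncard = 5)
    (h0 : addOrderOf s₀ = 2) (hs : 2 < addOrderOf s) (hs' : 2 < addOrderOf s')
    (D : Set G)
    (hD : IsPerfectCode (cayley G ({s, -s, s', -s', s₀} : Set G)) D)
    (a : ℤ) (ha : a = 1 ∨ a = -1)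
    (hshift : ∀ g ∈ D, g + a • s + s' + s₀ ∈ D)
    (h l : ℤ)
    (hrel : h • s + l • s' = 0) :
    (3 : ℤ) ∣ (l - a * h) := by
  have hs₀ : -s₀ = s₀ := neg_eq_of_add_eq_zero_left <| by
    rw [← two_nsmul, ← h0, addOrderOf_nsmul_eq_zero]
  have hS : ∀ x ∈ ({s, -s, s', -s', s₀} : Set G), -x ∈ ({s, -s, s', -s', s₀} : Set G) := by
    simp only [Set.mem_insert_iff, Set.mem_singleton_iff]
    rintro x (rfl | rfl | rfl | rfl | rfl) <;> simp [hs₀]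
  have h0S : (0 : G) ∉ ({s, -s, s', -s', s₀} : Set G) := by
    simp only [Set.mem_insert_iff, Set.mem_singleton_iff, zero_eq_neg, not_or]
    refine ⟨?_, ?_, ?_, ?_, ?_⟩ <;> rintro rfl <;> simp_all
  have hball := (isPerfectCode_cayley_iff hS).1 hD
  have hcard : (quinticBall s s' s₀).ncard = 6 := by
    rw [quinticBall, Set.ncard_insert_of_notMem h0S, h5]
  have hinv : ∀ c, c + (a • s + s' + s₀) ∈ D ↔ c ∈ D :=
    add_mem_iff_of_forall_add_mem D.toFinite (by simpa only [add_assoc] using hshift)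
  rcases ha with rfl | rfl
  · have hD' : IsInvariantQuinticCode s s' s₀ D := ⟨hball, hs₀, by simpa using hinv, hcard⟩
    simpa using hD'.three_dvd_sub hrel
  · have hD' : IsInvariantQuinticCode (-s) s' s₀ D :=
      ⟨by rwa [quinticBall_neg_left], hs₀, by simpa using hinv, by rwa [quinticBall_neg_left]⟩
    simpa using hD'.three_dvd_sub (h := -h) (by simpa using hrel)

theorem stmt5 (G : Type*) [AddCommGroup G] [Fintype G] (s s' s₀ : G)
    (h5 : ({s, -s, s', -s', s₀} : Set G).ncard = 5)
    (h0 : addOrderOf s₀ = 2) (hs : 2 < addOrderOf s) (hs' : 2 < addOrderOf s')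
    (hgen : AddSubgroup.closure ({s, -s, s', -s', s₀} : Set G) = ⊤)
    (D : Set G)
    (hD : IsPerfectCode (cayley G ({s, -s, s', -s', s₀} : Set G)) D)
    (a : ℤ) (ha : a = 1 ∨ a = -1)
    (hshift : ∀ g ∈ D, g + a • s + s' + s₀ ∈ D)
    (h l : ℤ) (hh0 : 0 ≤ h) (hhm : h ≤ (addOrderOf s : ℤ))
    (hl0 : 0 ≤ l) (hlm : l ≤ (addOrderOf s' : ℤ))
    (hrel : h • s + l • s' = 0) :
    (3 : ℤ) ∣ (l - a * h) :=
  stmt5_general G s s' s₀ h5 h0 hs hs' D hD a ha hshift h l hrel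
end

section
/- Let Cay(G,S) be a connected quintic Cayley graph on a finite abelian group with S = {s, -s, s', -s', s₀}, s₀ an involution, o(s), o(s') > 2, admitting a perfect code, and suppose s₀ = (o(s)/2)·s + (o(s')/2)·s' (with o(s), o(s') both even). Then σ(o(s)) ≠ σ(o(s')) or σ(o(s)) = σ(o(s')) = 1. -/
/-!
Suppose `σ(o(s)) = σ(o(s')) = k ≥ 2`. Then `m = lcm(o(s), o(s'))/2` is even, and since
`lcm/o(s)` and `lcm/o(s')` are odd, `m • s = (o(s)/2) • s` and `m • s' = (o(s')/2) • s'`;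
hence `s₀ = m • (s' - s) = m • (s + s')`.

Let `e` be the indicator of the perfect code, so that `e` sums to `1` over every closed
neighbourhood, and put `f g = e g - e (g + s₀)`. Subtracting the neighbourhood equations at `v`
and `v + s₀` gives `f(v + s) + f(v - s) + f(v + s') + f(v - s') = 0`, so `g ↦ f g + f (g + s + s')`
is antiperiodic with antiperiod `s' - s`. As `s₀` is an even multiple of `s' - s` and `f` is
antiperiodic with antiperiod `s₀`, this function vanishes; so `f` is antiperiodic with antiperiod
`s + s'`, and the same argument gives `f = 0`. But `v` and `v + s₀` lie in one closed
neighbourhood, so an `s₀`-invariant perfect code would be empty.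
-/

open Function

lemma Nat.ne_zero_of_padicValNat_ne_zero {p n : ℕ} (h : padicValNat p n ≠ 0) : n ≠ 0 := by
  rintro rfl
  exact h (padicValNat_zero_right p)

lemma Nat.four_dvd_of_two_le_padicValNat {n : ℕ} (h : 2 ≤ padicValNat 2 n) : 4 ∣ n :=
  (padicValNat_dvd_iff_le (p := 2) (n := 2)
    (Nat.ne_zero_of_padicValNat_ne_zero (p := 2) (by omega))).2 h

lemma Nat.odd_lcm_div_left_of_padicValNat_two_eq {n n' : ℕ} (hn : n ≠ 0) (hn' : n' ≠ 0)
    (h : padicValNat 2 n = padicValNat 2 n') : Odd (Nat.lcm n n' / n) := by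
  have hval : padicValNat 2 (Nat.lcm n n') = padicValNat 2 n := by
    rw [← Nat.factorization_def _ Nat.prime_two, Nat.factorization_lcm hn hn', Finsupp.sup_apply,
      Nat.factorization_def _ Nat.prime_two, Nat.factorization_def _ Nat.prime_two, h, max_self]
  have hzero : padicValNat 2 (Nat.lcm n n' / n) = 0 := by
    rw [padicValNat.div_of_dvd (Nat.dvd_lcm_left n n'), hval, Nat.sub_self]
  have hne : Nat.lcm n n' / n ≠ 0 :=
    (Nat.div_pos (Nat.le_of_dvd (Nat.pos_of_ne_zero (Nat.lcm_ne_zero hn hn'))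
      (Nat.dvd_lcm_left n n')) (Nat.pos_of_ne_zero hn)).ne'
  simpa [padicValNat.eq_zero_iff, hne, Nat.odd_iff, Nat.two_dvd_ne_zero] using hzero

lemma Nat.lcm_div_two_eq_mul_half {n n' : ℕ} (hn : 2 ∣ n) :
    Nat.lcm n n' / 2 = Nat.lcm n n' / n * (n / 2) := by
  refine Nat.div_eq_of_eq_mul_left two_pos ?_
  rw [mul_assoc, Nat.div_mul_cancel hn, Nat.div_mul_cancel (Nat.dvd_lcm_left n n')]

lemma Function.Antiperiodic.eq_zero_of_even_nsmul {α M : Type*} [AddMonoid α] [AddGroup M]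
    [IsAddTorsionFree M] {f : α → M} {b c : α} (hb : Antiperiodic f b) (hc : Antiperiodic f c)
    {m : ℕ} (hm : Even m) (h : m • b = c) : f = 0 := by
  obtain ⟨r, rfl⟩ := hm
  funext x
  have := hc x
  rw [← h, ← two_mul, hb.even_nsmul_periodic r x] at this
  exact self_eq_neg.1 this

section Group

variable {G : Type*} [AddCommGroup G]

lemma odd_mul_half_addOrderOf_nsmul {x : G} {q : ℕ} (hq : Odd q) (hx : 2 ∣ addOrderOf x) :
    (q * (addOrderOf x / 2)) • x = (addOrderOf x / 2) • x := by
  obtain ⟨r, rfl⟩ := hq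
  have : (2 * (addOrderOf x / 2)) • x = 0 := by
    rw [Nat.mul_div_cancel' hx, addOrderOf_nsmul_eq_zero]
  rw [add_mul, one_mul, add_nsmul, mul_comm 2 r, mul_assoc, mul_nsmul', this, nsmul_zero, zero_add]

lemma neg_half_addOrderOf_nsmul {x : G} (hx : 2 ∣ addOrderOf x) :
    -((addOrderOf x / 2) • x) = (addOrderOf x / 2) • x := by
  refine neg_eq_of_add_eq_zero_left ?_
  rw [← add_nsmul, ← two_mul, Nat.mul_div_cancel' hx, addOrderOf_nsmul_eq_zero]

lemma two_nsmul_ne_zero_of_two_le_padicValNat {x : G} (h : 2 ≤ padicValNat 2 (addOrderOf x)) :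
    2 • x ≠ 0 := fun hx => by
  have := (Nat.four_dvd_of_two_le_padicValNat h).trans (addOrderOf_dvd_of_nsmul_eq_zero hx)
  omega

lemma exists_even_nsmul_sub_eq_and_nsmul_add_eq {x y : G}
    (hxy : padicValNat 2 (addOrderOf x) = padicValNat 2 (addOrderOf y))
    (h2 : 2 ≤ padicValNat 2 (addOrderOf x)) :
    ∃ m : ℕ, Even m ∧ m • (y - x) = (addOrderOf x / 2) • x + (addOrderOf y / 2) • y ∧
      m • (x + y) = (addOrderOf x / 2) • x + (addOrderOf y / 2) • y := by
  have h4x := Nat.four_dvd_of_two_le_padicValNat h2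
  have h4y := Nat.four_dvd_of_two_le_padicValNat (hxy ▸ h2)
  have hx := Nat.ne_zero_of_padicValNat_ne_zero (p := 2) (n := addOrderOf x) (by omega)
  have hy := Nat.ne_zero_of_padicValNat_ne_zero (p := 2) (n := addOrderOf y) (by omega)
  have hmx : (Nat.lcm (addOrderOf x) (addOrderOf y) / 2) • x = (addOrderOf x / 2) • x := by
    rw [Nat.lcm_div_two_eq_mul_half (by omega),
      odd_mul_half_addOrderOf_nsmul (Nat.odd_lcm_div_left_of_padicValNat_two_eq hx hy hxy)
        (by omega)]
  have hmy : (Nat.lcm (addOrderOf x) (addOrderOf y) / 2) • y = (addOrderOf y / 2) • y := by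
    rw [Nat.lcm_comm, Nat.lcm_div_two_eq_mul_half (by omega),
      odd_mul_half_addOrderOf_nsmul (Nat.odd_lcm_div_left_of_padicValNat_two_eq hy hx hxy.symm)
        (by omega)]
  refine ⟨Nat.lcm (addOrderOf x) (addOrderOf y) / 2, ?_, ?_, ?_⟩
  · have := h4x.trans (Nat.dvd_lcm_left (addOrderOf x) (addOrderOf y))
    rw [Nat.even_iff]
    omega
  · rw [nsmul_sub, hmx, hmy, sub_eq_add_neg, neg_half_addOrderOf_nsmul (by omega), add_comm]
  · rw [nsmul_add, hmx, hmy]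

lemma cayley_adj_iff_sub_mem {S : Set G} (hS0 : 0 ∉ S) (hSneg : ∀ x ∈ S, -x ∈ S) {x y : G} :
    (cayley G S).Adj x y ↔ y - x ∈ S := by
  refine ⟨fun ⟨_, h⟩ => h.elim id fun h => neg_sub x y ▸ hSneg _ h, fun h => ⟨?_, Or.inl h⟩⟩
  rintro rfl
  exact hS0 (sub_self x ▸ h)

lemma IsPerfectCode.sum_indicator_cayley [DecidableEq G] {S : Finset G} {D : Set G}
    (hD : IsPerfectCode (cayley G S) D) (hS0 : 0 ∉ S) (hSneg : ∀ x ∈ S, -x ∈ S) (v : G) :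
    ∑ a ∈ insert 0 S, D.indicator 1 (v + a) = (1 : ℤ) := by
  classical
  obtain ⟨c, ⟨hcD, hvc⟩, hc⟩ := hD v
  have hdom : ∀ a, v = v + a ∨ (cayley G S).Adj v (v + a) ↔ a ∈ insert 0 S := by
    intro a
    rw [cayley_adj_iff_sub_mem (by exact_mod_cast hS0) (by exact_mod_cast hSneg),
      add_sub_cancel_left, Finset.mem_insert, eq_comm, add_eq_left, Finset.mem_coe]
  simp only [Set.indicator_apply, Pi.one_apply, Finset.sum_boole, Nat.cast_eq_one,
    Finset.card_eq_one]
  refine ⟨c - v, Finset.eq_singleton_iff_unique_mem.2 ⟨?_, ?_⟩⟩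
  · rw [Finset.mem_filter, ← hdom, add_sub_cancel]
    exact ⟨hvc, hcD⟩
  · intro a ha
    rw [Finset.mem_filter, ← hdom] at ha
    rw [← hc (v + a) ⟨ha.2, ha.1⟩, add_sub_cancel_left]

variable {s s' s₀ : G}

lemma IsPerfectCode.indicator_sum_eq_one {D : Set G}
    (hD : IsPerfectCode (cayley G {s, -s, s', -s', s₀}) D) (hs : 2 • s ≠ 0) (hs' : 2 • s' ≠ 0)
    (hs₀ : s₀ ≠ 0) (h2s₀ : 2 • s₀ = 0) (hss' : s' ≠ s) (hss'' : s' ≠ -s) (v : G) :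
    D.indicator 1 v + D.indicator 1 (v + s) + D.indicator 1 (v - s) + D.indicator 1 (v + s') +
      D.indicator 1 (v - s') + D.indicator 1 (v + s₀) = (1 : ℤ) := by
  classical
  rw [two_nsmul] at hs hs' h2s₀
  have hD' : IsPerfectCode (cayley G ({s, -s, s', -s', s₀} : Finset G)) D := by simpa using hD
  have h := hD'.sum_indicator_cayley (by simp only [Finset.mem_insert, Finset.mem_singleton]; grind)
    (by simp only [Finset.mem_insert, Finset.mem_singleton, forall_eq_or_imp, forall_eq]; grind) v
  rw [Finset.sum_insert, Finset.sum_insert, Finset.sum_insert, Finset.sum_insert,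
    Finset.sum_insert, Finset.sum_singleton] at h
  · simpa only [add_zero, ← sub_eq_add_neg, add_assoc] using h
  all_goals simp only [Finset.mem_insert, Finset.mem_singleton, not_or]; grind

variable {M : Type*} [AddCommGroup M] [IsAddTorsionFree M]

lemma Function.Antiperiodic.eq_zero_of_sum_eq_zero {f : G → M} (hf : Antiperiodic f s₀)
    (hsum : ∀ v, f (v + s) + f (v - s) + f (v + s') + f (v - s') = 0)
    {m : ℕ} (hm : Even m) (h₁ : m • (s' - s) = s₀) (h₂ : m • (s + s') = s₀) : f = 0 := by
  set f₁ : G → M := fun g => f g + f (g + (s + s'))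
  have hf₁ : Antiperiodic f₁ (s' - s) := by
    intro g
    obtain ⟨v, rfl⟩ : ∃ v, g = v - s' := ⟨g + s', by abel⟩
    simp only [f₁]
    rw [show v - s' + (s' - s) = v - s by abel, show v - s + (s + s') = v + s' by abel,
      show v - s' + (s + s') = v + s by abel, eq_neg_iff_add_eq_zero, ← hsum v]
    abel
  have hf₁₀ : Antiperiodic f₁ s₀ := fun g => by
    simp only [f₁]
    rw [add_right_comm, hf, hf, neg_add]
  have hf' : Antiperiodic f (s + s') := fun g =>
    eq_neg_of_add_eq_zero_right (congrFun (hf₁.eq_zero_of_even_nsmul hf₁₀ hm h₁) g)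
  exact hf'.eq_zero_of_even_nsmul hf hm h₂

lemma Function.periodic_of_sum_eq {e : G → M} {k : M} (h2s₀ : 2 • s₀ = 0)
    (he : ∀ v, e v + e (v + s) + e (v - s) + e (v + s') + e (v - s') + e (v + s₀) = k)
    {m : ℕ} (hm : Even m) (h₁ : m • (s' - s) = s₀) (h₂ : m • (s + s') = s₀) : Periodic e s₀ := by
  rw [two_nsmul] at h2s₀
  set f : G → M := fun g => e g - e (g + s₀)
  have hf : Antiperiodic f s₀ := fun g => by
    simp only [f]
    rw [add_assoc, h2s₀, add_zero, neg_sub]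
  have hsum : ∀ v, f (v + s) + f (v - s) + f (v + s') + f (v - s') = 0 := by
    intro v
    have h := congrArg₂ (· - ·) (he v) (he (v + s₀))
    simp only [sub_self] at h
    rw [add_assoc v s₀ s₀, h2s₀, add_zero, add_right_comm v s₀ s, add_right_comm v s₀ s',
      add_sub_right_comm v s₀ s, add_sub_right_comm v s₀ s'] at h
    simp only [f]
    rw [← h]
    abel
  intro g
  exact (sub_eq_zero.1 (congrFun (hf.eq_zero_of_sum_eq_zero hsum hm h₁ h₂) g)).symm

lemma not_periodic_of_sum_eq_one {e : G → ℤ} (hnonneg : ∀ x, 0 ≤ e x)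
    (he : ∀ v, e v + e (v + s) + e (v - s) + e (v + s') + e (v - s') + e (v + s₀) = 1) :
    ¬Periodic e s₀ := by
  intro hper
  have hzero : ∀ v, e v = 0 := fun v => by
    have hlt : e v < 1 := by
      linarith [he v, hper v, hnonneg v, hnonneg (v + s), hnonneg (v - s), hnonneg (v + s'),
        hnonneg (v - s')]
    have := hnonneg v
    omega
  simpa [hzero] using he 0

end Group

theorem stmt14_general (G : Type*) [AddCommGroup G] [Fintype G] (s s' s₀ : G)
    (h0 : addOrderOf s₀ = 2)
    (D : Set G)
    (hD : IsPerfectCode (cayley G ({s, -s, s', -s', s₀} : Set G)) D)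
    (he : 2 ∣ addOrderOf s)
    (hs0 : s₀ = (addOrderOf s / 2) • s + (addOrderOf s' / 2) • s') :
    sigma2 (addOrderOf s) ≠ sigma2 (addOrderOf s') ∨
      (sigma2 (addOrderOf s) = 1 ∧ sigma2 (addOrderOf s') = 1) := by
  by_contra! ⟨hσ, hσ1⟩
  unfold sigma2 at hσ hσ1
  have h2 : 2 ≤ padicValNat 2 (addOrderOf s) := by
    have := (dvd_iff_padicValNat_ne_zero (addOrderOf_pos s).ne').1 he
    grind
  obtain ⟨m, hm, h₁, h₂⟩ := exists_even_nsmul_sub_eq_and_nsmul_add_eq hσ h2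
  rw [← hs0] at h₁ h₂
  have hs₀ : s₀ ≠ 0 := by rintro rfl; simp at h0
  have h2s₀ : 2 • s₀ = 0 := h0 ▸ addOrderOf_nsmul_eq_zero s₀
  have hcode := hD.indicator_sum_eq_one (two_nsmul_ne_zero_of_two_le_padicValNat h2)
    (two_nsmul_ne_zero_of_two_le_padicValNat (hσ ▸ h2)) hs₀ h2s₀
    (fun h => hs₀ (by rw [← h₁, h, sub_self, nsmul_zero]))
    (fun h => hs₀ (by rw [← h₂, h, add_neg_cancel, nsmul_zero]))
  exact not_periodic_of_sum_eq_one (Set.indicator_nonneg fun _ _ => zero_le_one) hcode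
    (periodic_of_sum_eq h2s₀ hcode hm h₁ h₂)

theorem stmt14 (G : Type*) [AddCommGroup G] [Fintype G] (s s' s₀ : G)
    (h5 : ({s, -s, s', -s', s₀} : Set G).ncard = 5)
    (h0 : addOrderOf s₀ = 2) (hs : 2 < addOrderOf s) (hs' : 2 < addOrderOf s')
    (hgen : AddSubgroup.closure ({s, -s, s', -s', s₀} : Set G) = ⊤)
    (D : Set G)
    (hD : IsPerfectCode (cayley G ({s, -s, s', -s', s₀} : Set G)) D)
    (he : 2 ∣ addOrderOf s) (he' : 2 ∣ addOrderOf s')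
    (hs0 : s₀ = (addOrderOf s / 2) • s + (addOrderOf s' / 2) • s') :
    sigma2 (addOrderOf s) ≠ sigma2 (addOrderOf s') ∨
      (sigma2 (addOrderOf s) = 1 ∧ sigma2 (addOrderOf s') = 1) :=
  stmt14_general G s s' s₀ h0 D hD he hs0
end
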